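/- With K_t and K^ε_t as above (ε ∈ {0,1}, K^ε_t := {α ∈ K_t : α(⟨Σ^t_{|t|},0⟩) = ε}): every nonempty relatively open subset of K^ε_t contains K_{t⌢n} for some n with w_n(0) = ε. -/

import Mathlib

/-- Triangular numbers. -/
def tri (m : ℕ) : ℕ := m * (m + 1) / 2

/-- The pairing `⟨n,p⟩ := (Σ_{k ≤ n+p} k) + p`. -/
def pairN (n p : ℕ) : ℕ := tri (n + p) + p

/-- `Σ^t_k := Σ_{j<k} (t(j) + 2)`. -/
def sigT (t : List ℕ) (k : ℕ) : ℕ := ((t.take k).map (· + 2)).sum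

/-- The set `K_t ⊆ 2^ω`: for each `k < |t|`, the vertical slices numbered
`Σ^t_k, …, Σ^t_k + t(k) + 1` are prescribed: the `i`-th of them is
`(w_{t(k)})_i · 0^∞`, except that the `0`-th one additionally carries a `1`
at position `t(k) + 1` (i.e. equals `(w_{t(k)})₀·0^{t(k)+1-|(w_{t(k)})₀|}·1·0^∞`). -/
def Kt (w : ℕ → List Bool) (t : List ℕ) : Set (ℕ → Bool) :=
  {α | ∀ k < t.length, ∀ i < t.getD k 0 + 2, ∀ p,
    α (pairN (sigT t k + i) p) =
      if i = 0 ∧ p = t.getD k 0 + 1 then true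
      else (w (t.getD k 0)).getD (pairN i p) false}

/-- The clopen piece `K^ε_t := {α ∈ K_t : α(⟨Σ^t_{|t|}, 0⟩) = ε}`. -/
def Keps (w : ℕ → List Bool) (t : List ℕ) (ε : Bool) : Set (ℕ → Bool) :=
  {α | α ∈ Kt w t ∧ α (pairN (sigT t t.length) 0) = ε}

/-!
A nonempty open subset of `K^ε_t` contains all points of `K^ε_t` that agree with some
`α ∈ K^ε_t` below a bound `N`. Points of `K_t` already agree on the slices below
`Σ := Σ^t_{|t|}`; the other coordinates below `N` are read off the first `N` entries `u` of the
merge `⟨α_Σ, α_{Σ+1}, …⟩`. By density `u` is a prefix of some `w_n`. Every `β ∈ K_{t⌢n}` copies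
`w_n` onto the slices `Σ, …, Σ + n + 1`, hence agrees with `α` below `N` (the extra `1` at
position `n + 1` is out of range because `N ≤ |w_n| = n + 1`), and
`β(⟨Σ, 0⟩) = w_n(0) = u(0) = α(⟨Σ, 0⟩) = ε`.
-/

lemma tri_succ (s : ℕ) : tri (s + 1) = tri s + (s + 1) := by
  unfold tri
  have h : (s + 1) * (s + 1 + 1) = s * (s + 1) + (s + 1) * 2 := by ring
  rw [h, Nat.add_mul_div_right _ _ (by norm_num)]

lemma tri_mono : Monotone tri := fun _ _ h =>
  Nat.div_le_div_right (Nat.mul_le_mul h (by omega))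

lemma self_le_tri (a : ℕ) : a ≤ tri a := by
  induction a with
  | zero => simp [tri]
  | succ a ih => rw [tri_succ]; omega

/-- Inverse of `pairN`, enumerating the diagonals `n + p = const` by increasing `p`. -/
def unpairN : ℕ → ℕ × ℕ
  | 0 => (0, 0)
  | m + 1 =>
    match unpairN m with
    | (0, p) => (p + 1, 0)
    | (q + 1, p) => (q, p + 1)

lemma pairN_unpairN (m : ℕ) : pairN (unpairN m).1 (unpairN m).2 = m := by
  induction m with
  | zero => rfl
  | succ m ih =>
    rcases h : unpairN m with ⟨_ | q, p⟩ <;> rw [h] at ih <;> simp only [unpairN, h] <;>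
      simp only [pairN] at ih ⊢
    · rw [Nat.zero_add] at ih
      rw [Nat.add_zero, tri_succ]
      omega
    · rw [show q + (p + 1) = q + 1 + p by omega]
      omega

lemma pairN_inj {a b c d : ℕ} (h : pairN a b = pairN c d) : a = c ∧ b = d := by
  unfold pairN at h
  have key : ∀ {x y : ℕ}, x < y → tri x + (x + 1) ≤ tri y := fun hlt => by
    rw [← tri_succ]; exact tri_mono hlt
  rcases lt_trichotomy (a + b) (c + d) with hlt | heq | hgt
  · have := key hlt; omega
  · rw [heq] at h; omega
  · have := key hgt; omega

lemma unpairN_pairN (q p : ℕ) : unpairN (pairN q p) = (q, p) := by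
  obtain ⟨h₁, h₂⟩ := pairN_inj (pairN_unpairN (pairN q p))
  exact Prod.ext h₁ h₂

lemma pairN_mono_left {q q' : ℕ} (h : q ≤ q') (p : ℕ) : pairN q p ≤ pairN q' p := by
  unfold pairN
  have := tri_mono (Nat.add_le_add_right h p)
  omega

lemma left_le_pairN (q p : ℕ) : q ≤ pairN q p := by
  unfold pairN
  have := self_le_tri (q + p)
  omega

lemma right_le_pairN (q p : ℕ) : p ≤ pairN q p := by
  unfold pairN; omega

lemma sigT_append_of_le_length (t s : List ℕ) {k : ℕ} (hk : k ≤ t.length) :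
    sigT (t ++ s) k = sigT t k := by
  unfold sigT
  rw [List.take_append_of_le_length hk]

lemma sigT_cons_succ (a : ℕ) (t : List ℕ) (k : ℕ) :
    sigT (a :: t) (k + 1) = a + 2 + sigT t k := by
  simp [sigT]

lemma exists_eq_sigT_add_of_lt_sigT (t : List ℕ) {q : ℕ} (hq : q < sigT t t.length) :
    ∃ k < t.length, ∃ i < t.getD k 0 + 2, q = sigT t k + i := by
  induction t generalizing q with
  | nil => simp [sigT] at hq
  | cons a t ih =>
    rw [List.length_cons, sigT_cons_succ] at hq
    by_cases hqa : q < a + 2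
    · exact ⟨0, by simp, q, by simpa using hqa, by simp [sigT]⟩
    · obtain ⟨k, hk, i, hi, hqi⟩ := ih (q := q - (a + 2)) (by omega)
      refine ⟨k + 1, by simpa using hk, i, by simpa using hi, ?_⟩
      rw [sigT_cons_succ]
      omega

/-- The merge `⟨α_S, α_{S+1}, …⟩` of the slices of `α` from `S` on. -/
def dropSlices (S : ℕ) (α : ℕ → Bool) : ℕ → Bool :=
  fun m => α (pairN (S + (unpairN m).1) (unpairN m).2)

lemma dropSlices_pairN (S : ℕ) (α : ℕ → Bool) (i p : ℕ) :
    dropSlices S α (pairN i p) = α (pairN (S + i) p) := by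
  simp [dropSlices, unpairN_pairN]

lemma getD_of_prefix_ofFn {γ : Type*} {N : ℕ} {f : Fin N → γ} {v : List γ}
    (h : List.ofFn f <+: v) {j : ℕ} (hj : j < N) (d : γ) : v.getD j d = f ⟨j, hj⟩ := by
  obtain ⟨r, rfl⟩ := h
  rw [List.getD_append _ _ _ _ (by simpa using hj), List.getD_eq_getElem _ _ (by simpa using hj),
    List.getElem_ofFn]

section Kt

variable {w : ℕ → List Bool} {t : List ℕ}

lemma Kt_append_subset (s : List ℕ) : Kt w (t ++ s) ⊆ Kt w t := by
  intro β hβ k hk i hi p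
  have h := hβ k (by simp; omega) i (by rwa [List.getD_append _ _ _ _ hk]) p
  rwa [sigT_append_of_le_length _ _ hk.le, List.getD_append _ _ _ _ hk] at h

lemma apply_eq_of_mem_Kt_of_lt_sigT {α β : ℕ → Bool} (hα : α ∈ Kt w t) (hβ : β ∈ Kt w t)
    {q : ℕ} (hq : q < sigT t t.length) (p : ℕ) : α (pairN q p) = β (pairN q p) := by
  obtain ⟨k, hk, i, hi, rfl⟩ := exists_eq_sigT_add_of_lt_sigT t hq
  rw [hα k hk i hi p, hβ k hk i hi p]

lemma apply_last_slice_of_mem_Kt_concat {n : ℕ} {β : ℕ → Bool} (hβ : β ∈ Kt w (t ++ [n]))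
    {i : ℕ} (hi : i < n + 2) (p : ℕ) :
    β (pairN (sigT t t.length + i) p) =
      if i = 0 ∧ p = n + 1 then true else (w n).getD (pairN i p) false := by
  have hlast : (t ++ [n]).getD t.length 0 = n := by simp
  have h := hβ t.length (by simp) i (by rwa [hlast]) p
  rwa [sigT_append_of_le_length _ _ le_rfl, hlast] at h

lemma Kt_concat_subset_Keps (n : ℕ) : Kt w (t ++ [n]) ⊆ Keps w t ((w n).getD 0 false) :=
  fun _ hβ => ⟨Kt_append_subset _ hβ, apply_last_slice_of_mem_Kt_concat hβ (i := 0) (by omega) 0⟩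

lemma Kt_concat_subset_cylinder {α : ℕ → Bool} (hα : α ∈ Kt w t) {N n : ℕ}
    (hpre : List.ofFn (fun j : Fin N => dropSlices (sigT t t.length) α j) <+: w n)
    (hlen : (w n).length ≤ n + 1) : Kt w (t ++ [n]) ⊆ PiNat.cylinder α N := by
  intro β hβ m hm
  have hN : N ≤ n + 1 := by simpa using hpre.length_le.trans hlen
  obtain ⟨q, p, rfl⟩ : ∃ q p, m = pairN q p := ⟨_, _, (pairN_unpairN m).symm⟩
  by_cases hq : q < sigT t t.length
  · exact apply_eq_of_mem_Kt_of_lt_sigT (Kt_append_subset _ hβ) hα hq p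
  obtain ⟨i, rfl⟩ := Nat.exists_eq_add_of_le (not_lt.mp hq)
  have hiN : pairN i p < N := (pairN_mono_left (by omega) p).trans_lt hm
  have hp : p < n + 1 := (right_le_pairN _ p).trans_lt (hm.trans_le hN)
  have hi : i < n + 2 := by have := left_le_pairN i p; omega
  rw [apply_last_slice_of_mem_Kt_concat hβ hi p, if_neg (by omega), getD_of_prefix_ofFn hpre hiN,
    dropSlices_pairN]

end Kt

/-- every nonempty relatively open subset of `K^ε_t` contains some
`K_{t⌢n}` with `w_n(0) = ε`. -/
theorem stmt14 (w : ℕ → List Bool) (hw : ∀ n, (w n).length = n + 1)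
    (hdense : ∀ s : List Bool, ∃ n, s <+: w n) (t : List ℕ) (ε : Bool)
    (U : Set (ℕ → Bool)) (hU : IsOpen U) (hne : (U ∩ Keps w t ε).Nonempty) :
    ∃ n, (w n).getD 0 false = ε ∧ Kt w (t ++ [n]) ⊆ U ∩ Keps w t ε := by
  obtain ⟨α, hαU, hαK, hαε⟩ := hne
  obtain ⟨_, ⟨x, N, rfl⟩, hαN, hNU⟩ :=
    (PiNat.isTopologicalBasis_cylinders fun _ => Bool).exists_subset_of_mem_open hαU hU
  rw [← PiNat.mem_cylinder_iff_eq.1 hαN] at hNU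
  -- length `N + 1`, so that the word has an entry `0` even when `N = 0`
  obtain ⟨n, hpre⟩ :=
    hdense (List.ofFn fun j : Fin (N + 1) => dropSlices (sigT t t.length) α j)
  have hw0 : (w n).getD 0 false = ε := by
    rw [getD_of_prefix_ofFn hpre N.succ_pos, ← hαε]
    exact dropSlices_pairN _ α 0 0
  refine ⟨n, hw0, fun β hβ => ⟨?_, hw0 ▸ Kt_concat_subset_Keps n hβ⟩⟩
  exact hNU (PiNat.cylinder_anti α N.le_succ (Kt_concat_subset_cylinder hαK hpre (hw n).le hβ))
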